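/- Let X be a real symmetric positive semidefinite n×n matrix and let k ≤ n. Then rank(X) ≤ k if and only if there exists a real symmetric n×n matrix U with U ⪰ 0, I_n − U ⪰ 0, tr(U) = n − k, and tr(U X) = 0. -/

import Mathlib

/-!
(⇒) Diagonalize `X = V diag(λ) Vᴴ`; since at least `n - k` of the `λᵢ` vanish, choose a set `S`
of `n - k` such indices and take for `U` the orthogonal projection `V diag(𝟙_S) Vᴴ`.

(⇐) Write `U = aᴴa` and `X = bᴴb`; then `tr (U X) = ‖b aᴴ‖²` (Frobenius), so `U X = 0` and
`rank U + rank X ≤ n`. As `0 ⪯ U ⪯ I`, the eigenvalues of `U` lie in `[0, 1]`, hence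
`n - k = tr U ≤ rank U`.
-/

open Matrix

namespace Matrix

open scoped ComplexOrder MatrixOrder

variable {n 𝕜 : Type*} [Fintype n] [DecidableEq n] [RCLike 𝕜]

theorem PosSemidef.mul_eq_zero_of_trace_mul_eq_zero {A B : Matrix n n 𝕜}
    (hA : A.PosSemidef) (hB : B.PosSemidef) (h : (A * B).trace = 0) : A * B = 0 := by
  obtain ⟨a, rfl⟩ := CStarAlgebra.nonneg_iff_eq_star_mul_self.mp hA.nonneg
  obtain ⟨b, rfl⟩ := CStarAlgebra.nonneg_iff_eq_star_mul_self.mp hB.nonneg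
  have hba : b * star a = 0 := by
    rw [← trace_conjTranspose_mul_self_eq_zero_iff, ← h]
    calc ((b * star a)ᴴ * (b * star a)).trace = (a * star b * b * star a).trace := by
          simp [← star_eq_conjTranspose, mul_assoc]
      _ = (star a * (a * star b * b)).trace := trace_mul_comm _ _
      _ = (star a * a * (star b * b)).trace := by simp only [mul_assoc]
  have hab : a * star b = 0 := by simpa using congrArg star hba
  rw [mul_assoc, ← mul_assoc a, hab, zero_mul, mul_zero]

theorem PosSemidef.eigenvalues_le_one {A : Matrix n n 𝕜} (hA : A.PosSemidef)
    (h : (1 - A).PosSemidef) (i : n) : hA.1.eigenvalues i ≤ 1 := by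
  have hle : A ≤ algebraMap ℝ (Matrix n n 𝕜) 1 := by simpa [Matrix.le_iff] using h
  exact (le_algebraMap_iff_spectrum_le hA.1.isSelfAdjoint).mp hle _
    (hA.1.spectrum_real_eq_range_eigenvalues ▸ Set.mem_range_self i)

theorem PosSemidef.trace_le_rank {A : Matrix n n 𝕜} (hA : A.PosSemidef)
    (h : (1 - A).PosSemidef) : A.trace ≤ A.rank := by
  have hsum : ∑ i, hA.1.eigenvalues i ≤ A.rank := by
    rw [hA.1.rank_eq_card_non_zero_eigs, Fintype.card_subtype, ← Finset.sum_filter_ne_zero]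
    simpa using Finset.sum_le_sum fun i (_ : i ∈ Finset.univ.filter (hA.1.eigenvalues · ≠ 0)) ↦
      hA.eigenvalues_le_one h i
  rw [hA.1.trace_eq_sum_eigenvalues, ← RCLike.ofReal_sum, ← RCLike.ofReal_natCast]
  exact RCLike.ofReal_le_ofReal.mpr hsum

theorem trace_conjStarAlgAut (u : unitary (Matrix n n 𝕜)) (A : Matrix n n 𝕜) :
    (Unitary.conjStarAlgAut 𝕜 _ u A).trace = A.trace := by
  rw [Unitary.conjStarAlgAut_apply, trace_mul_cycle, Unitary.coe_star_mul_self, one_mul]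

theorem PosSemidef.conjStarAlgAut {A : Matrix n n 𝕜} (hA : A.PosSemidef)
    (u : unitary (Matrix n n 𝕜)) : (Unitary.conjStarAlgAut 𝕜 _ u A).PosSemidef := by
  simpa [star_eq_conjTranspose] using hA.mul_mul_conjTranspose_same (u : Matrix n n 𝕜)

theorem IsHermitian.exists_card_eq_subset_eigenvalues_eq_zero {A : Matrix n n 𝕜}
    (hA : A.IsHermitian) {m : ℕ} (hm : A.rank + m ≤ Fintype.card n) :
    ∃ S : Finset n, S.card = m ∧ ∀ i ∈ S, hA.eigenvalues i = 0 := by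
  set Z := Finset.univ.filter (hA.eigenvalues · = 0)
  have hcard : Z.card + A.rank = Fintype.card n := by
    rw [hA.rank_eq_card_non_zero_eigs, Fintype.card_subtype, Finset.card_filter_add_card_filter_not,
      Finset.card_univ]
  obtain ⟨S, hS, hScard⟩ := Finset.exists_subset_card_eq (s := Z) (n := m) (by omega)
  exact ⟨S, hScard, fun i hi ↦ by simpa [Z] using hS hi⟩

theorem IsHermitian.exists_posSemidef_trace_eq_mul_eq_zero {A : Matrix n n 𝕜}
    (hA : A.IsHermitian) {m : ℕ} (hm : A.rank + m ≤ Fintype.card n) :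
    ∃ U : Matrix n n 𝕜, U.PosSemidef ∧ (1 - U).PosSemidef ∧ U.trace = m ∧ U * A = 0 := by
  obtain ⟨S, hScard, hS⟩ := hA.exists_card_eq_subset_eigenvalues_eq_zero hm
  set conj := Unitary.conjStarAlgAut 𝕜 _ hA.eigenvectorUnitary
  set d : n → 𝕜 := fun i ↦ if i ∈ S then 1 else 0
  have hd : ∀ i, 0 ≤ d i ∧ 0 ≤ 1 - d i := fun i ↦ by by_cases hi : i ∈ S <;> simp [d, hi]
  refine ⟨conj (diagonal d), ?_, ?_, ?_, ?_⟩
  · exact (PosSemidef.diagonal fun i ↦ (hd i).1).conjStarAlgAut _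
  · rw [← map_one conj, ← map_sub, ← diagonal_one, diagonal_sub]
    exact (PosSemidef.diagonal fun i ↦ (hd i).2).conjStarAlgAut _
  · rw [trace_conjStarAlgAut, trace_diagonal, Finset.sum_boole, Finset.filter_mem_eq_inter,
      Finset.univ_inter, hScard]
  · have hdA : (fun i ↦ d i * hA.eigenvalues i) = 0 :=
      funext fun i ↦ by by_cases hi : i ∈ S <;> simp [d, hi, hS i]
    conv_lhs => rw [hA.spectral_theorem, ← map_mul, diagonal_mul_diagonal, Function.comp_def, hdA,
      Pi.zero_def, diagonal_zero]
    exact map_zero conj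

end Matrix

theorem stmt13_general {n : ℕ} (X : Matrix (Fin n) (Fin n) ℝ) (hX : X.PosSemidef)
    (k : ℕ) :
    X.rank ≤ k ↔
      ∃ U : Matrix (Fin n) (Fin n) ℝ, U.IsSymm ∧ U.PosSemidef ∧
        ((1 : Matrix (Fin n) (Fin n) ℝ) - U).PosSemidef ∧
        U.trace = ((n - k : ℕ) : ℝ) ∧ (U * X).trace = 0 := by
  constructor
  · intro hrank
    have hm : X.rank + (n - k) ≤ Fintype.card (Fin n) := by
      have := X.rank_le_width
      rw [Fintype.card_fin]
      omega
    obtain ⟨U, hU, hIU, htr, hUX⟩ := hX.1.exists_posSemidef_trace_eq_mul_eq_zero hm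
    exact ⟨U, isHermitian_iff_isSymm.mp hU.1, hU, hIU, htr, by rw [hUX, trace_zero]⟩
  · rintro ⟨U, -, hU, hIU, htr, hUX⟩
    have hrank := rank_add_rank_le_card_of_mul_eq_zero
      (hU.mul_eq_zero_of_trace_mul_eq_zero hX hUX)
    have htr_le : ((n - k : ℕ) : ℝ) ≤ U.rank := htr ▸ hU.trace_le_rank hIU
    rw [Fintype.card_fin] at hrank
    have := Nat.cast_le.mp htr_le
    omega

/-- Let `X` be a real symmetric positive semidefinite `n × n` matrix and
`k ≤ n`. Then `rank X ≤ k` if and only if there exists a real symmetric `n × n` matrix `U`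
with `U ⪰ 0`, `I_n − U ⪰ 0`, `tr U = n − k` and `tr (U X) = 0`. -/
theorem stmt13 {n : ℕ} (X : Matrix (Fin n) (Fin n) ℝ) (hX : X.PosSemidef)
    (k : ℕ) (hk : k ≤ n) :
    X.rank ≤ k ↔
      ∃ U : Matrix (Fin n) (Fin n) ℝ, U.IsSymm ∧ U.PosSemidef ∧
        ((1 : Matrix (Fin n) (Fin n) ℝ) - U).PosSemidef ∧
        U.trace = ((n - k : ℕ) : ℝ) ∧ (U * X).trace = 0 :=
  stmt13_general X hX k
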